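/- arXiv:1306.0219 — 4 statements merged into one kernel-verified Lean document; each statement's English description precedes it below -/
import Mathlib

section
/- Let H, κ ∈ ℝ with K := 4H² + κ < 0, and let v : ℝ → ℝ be differentiable on the interval (0, π/2). Define u on the open first quadrant Q := {(x,y) ∈ ℝ² : x > 0 ∧ y > 0} by u(x,y) := v(arctan(y/x)). Then for every (x,y) ∈ Q, writing s := arctan(y/x) and λ := 1/(√(−K)·y), one has 1 + (∂ₓu(x,y)/λ + 2H·λ·y)² + (∂ᵧu(x,y)/λ)² = 1 − 4H²/K − 4H·sin²(s)·v′(s) − K·sin²(s)·v′(s)². -/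
/-!
With `θ = arctan (y/x)`, the chain rule and `∇θ = (-y, x)/(x² + y²)` give
`u_x/λ = -√(-K) v'(θ) sin² θ` and `u_y/λ = √(-K) v'(θ) sin θ cos θ`, while `2Hλy = 2H/√(-K)`.
Expanding the squares, the `v'²` terms add up to `-K v'² (sin⁴ θ + sin² θ cos² θ) = -K v'² sin² θ`.
-/

open Real Set

open ContinuousLinearMap in
theorem hasFDerivAt_arctan_div {x : ℝ} (y : ℝ) (hx : x ≠ 0) :
    HasFDerivAt (fun p : ℝ × ℝ => arctan (p.2 / p.1))
      ((x ^ 2 + y ^ 2)⁻¹ • (-y • fst ℝ ℝ ℝ + x • snd ℝ ℝ ℝ)) (x, y) := by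
  have hdiv : HasFDerivAt (fun p : ℝ × ℝ => p.2 / p.1)
      ((x ^ 2)⁻¹ • (-y • fst ℝ ℝ ℝ + x • snd ℝ ℝ ℝ)) (x, y) := by
    simp_rw [div_eq_mul_inv]
    refine (hasFDerivAt_snd.mul
      ((hasDerivAt_inv hx).comp_hasFDerivAt (x, y) hasFDerivAt_fst)).congr_fderiv ?_
    ext <;> simp [field]
  refine ((hasDerivAt_arctan (y / x)).comp_hasFDerivAt (x, y) hdiv).congr_fderiv ?_
  ext <;> simp [field]

theorem sin_arctan_div_sq (x y : ℝ) (hx : x ≠ 0) :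
    sin (arctan (y / x)) ^ 2 = y ^ 2 / (x ^ 2 + y ^ 2) := by
  rw [sin_arctan, div_pow, sq_sqrt (by positivity)]
  field_simp

theorem arctan_div_mem_Ioo {x y : ℝ} (hx : 0 < x) (hy : 0 < y) :
    arctan (y / x) ∈ Ioo 0 (π / 2) :=
  ⟨arctan_zero ▸ arctan_strictMono (div_pos hy hx), arctan_lt_pi_div_two _⟩

/-- Evaluation of the gradient quantity `w = 1 + (u_x/λ + 2Hλy)² + (u_y/λ)²` on a
rotation-invariant graph `u(x,y) = v(arctan(y/x))` over the open first quadrant,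
in the model of `E(κ+4H², H)` with `K := 4H² + κ < 0` and `λ = 1/(√(−K)·y)`. -/
theorem gradient_quantity_rotation_invariant
    (H κ : ℝ) (hK : 4 * H ^ 2 + κ < 0)
    (v : ℝ → ℝ) (hv : DifferentiableOn ℝ v (Ioo 0 (π / 2)))
    (x y : ℝ) (hx : 0 < x) (hy : 0 < y) :
    let K : ℝ := 4 * H ^ 2 + κ
    let u : ℝ × ℝ → ℝ := fun p => v (Real.arctan (p.2 / p.1))
    let s : ℝ := Real.arctan (y / x)
    let lam : ℝ := 1 / (Real.sqrt (-K) * y)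
    let ux : ℝ := fderiv ℝ u (x, y) (1, 0)
    let uy : ℝ := fderiv ℝ u (x, y) (0, 1)
    1 + (ux / lam + 2 * H * lam * y) ^ 2 + (uy / lam) ^ 2
      = 1 - 4 * H ^ 2 / K - 4 * H * (Real.sin s) ^ 2 * deriv v s
        - K * (Real.sin s) ^ 2 * (deriv v s) ^ 2 := by
  intro K u s lam ux uy
  have hs : s ∈ Ioo 0 (π / 2) := arctan_div_mem_Ioo hx hy
  have hvs : HasDerivAt v (deriv v s) s :=
    (hv.differentiableAt (isOpen_Ioo.mem_nhds hs)).hasDerivAt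
  have hu : HasFDerivAt u _ (x, y) :=
    hvs.comp_hasFDerivAt (x, y) (hasFDerivAt_arctan_div y hx.ne')
  have hux : ux = -(deriv v s * y / (x ^ 2 + y ^ 2)) := by simp [ux, hu.fderiv, field]
  have huy : uy = deriv v s * x / (x ^ 2 + y ^ 2) := by simp [uy, hu.fderiv, field]
  have hc : √(-K) ^ 2 = -K := sq_sqrt (by linarith)
  have hc_pos : 0 < √(-K) := sqrt_pos.2 (by linarith)
  simp only [hux, huy, lam, s, sin_arctan_div_sq x y hx.ne']
  generalize √(-K) = c at hc hc_pos ⊢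
  rw [show K = -c ^ 2 by linarith]
  field_simp
  ring
end

section
/- Let H, κ ∈ ℝ with K := 4H² + κ < 0, and let v : ℝ → ℝ be twice continuously differentiable on (0, π/2). Define u on the open first quadrant Q := {(x,y) ∈ ℝ² : x > 0 ∧ y > 0} by u(x,y) := v(arctan(y/x)), and define w : Q → ℝ by w := 1 + (∂ₓu/λ + 2Hλy)² + (∂ᵧu/λ)², where λ := 1/(√(−K)·y). Then for each (x,y) ∈ Q, the minimal surface equation 2w·(∂ₓₓu + ∂ᵧᵧu) − ((2H/(−K·y) + ∂ₓu)·∂ₓw + ∂ᵧu·∂ᵧw) = 0 holds at (x,y) if and only if 2·W(s)·K·v″(s) − W′(s)·(2H + K·v′(s)) = 0 at s := arctan(y/x), where W(s) := 1 − 4H²/K − 4H·sin²(s)·v′(s) − K·sin²(s)·v′(s)². -/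
/-!
On the first quadrant `u = v ∘ θ`, where `θ = arctan (y / x)` is the polar angle. Its gradient
`∇θ = (-y, x) / r²` is divergence free and has `|∇θ|² = 1 / r²`, so `∇u = v'(θ) ∇θ` and
`Δu = v''(θ) / r²`. Since `sin² θ = y² / r²`, the weight `w` is `W ∘ θ`, hence `∇w = W'(θ) ∇θ`.
Substituting, the left-hand side of the minimal surface equation equals
`(2 W K v'' - W' (2H + K v')) / (K r²)`, and `K r² ≠ 0`.
-/

open Real Set Filter Topology

-- This is the polar angle only on the half-plane `0 < p.1`.
noncomputable def polarAngle (p : ℝ × ℝ) : ℝ := arctan (p.2 / p.1)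

noncomputable def polarAngleGrad (p : ℝ × ℝ) : ℝ × ℝ →L[ℝ] ℝ :=
  (p.1 ^ 2 + p.2 ^ 2)⁻¹ •
    (p.1 • ContinuousLinearMap.snd ℝ ℝ ℝ - p.2 • ContinuousLinearMap.fst ℝ ℝ ℝ)

@[simp]
lemma polarAngleGrad_apply (p e : ℝ × ℝ) :
    polarAngleGrad p e = (p.1 * e.2 - p.2 * e.1) / (p.1 ^ 2 + p.2 ^ 2) := by
  simp [polarAngleGrad, div_eq_inv_mul]

lemma polarAngle_mem_Ioo {p : ℝ × ℝ} (h₁ : 0 < p.1) (h₂ : 0 < p.2) :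
    polarAngle p ∈ Ioo 0 (π / 2) :=
  ⟨arctan_zero ▸ arctan_strictMono (div_pos h₂ h₁), arctan_lt_pi_div_two _⟩

lemma sin_polarAngle_sq {p : ℝ × ℝ} (h : p.1 ≠ 0) :
    sin (polarAngle p) ^ 2 = p.2 ^ 2 / (p.1 ^ 2 + p.2 ^ 2) := by
  rw [polarAngle, sin_arctan, div_pow, sq_sqrt (by positivity)]
  field_simp

lemma hasFDerivAt_polarAngle {p : ℝ × ℝ} (h : p.1 ≠ 0) :
    HasFDerivAt polarAngle (polarAngleGrad p) p := by
  have hdiv : HasFDerivAt (fun q : ℝ × ℝ => q.2 * q.1⁻¹)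
      (p.2 • (-(p.1 ^ 2)⁻¹ • ContinuousLinearMap.fst ℝ ℝ ℝ)
        + p.1⁻¹ • ContinuousLinearMap.snd ℝ ℝ ℝ) p :=
    hasFDerivAt_snd.mul ((hasDerivAt_inv h).comp_hasFDerivAt p hasFDerivAt_fst)
  refine hdiv.arctan.congr_fderiv <| ContinuousLinearMap.ext fun e => ?_
  simp only [add_apply, smul_apply, smul_eq_mul, ContinuousLinearMap.coe_fst',
    ContinuousLinearMap.coe_snd', polarAngleGrad_apply]
  field_simp
  ring

lemma HasDerivAt.hasFDerivAt_comp_polarAngle {f : ℝ → ℝ} {f' : ℝ} {p : ℝ × ℝ}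
    (hf : HasDerivAt f f' (polarAngle p)) (h : p.1 ≠ 0) :
    HasFDerivAt (fun q => f (polarAngle q)) (f' • polarAngleGrad p) p :=
  hf.comp_hasFDerivAt p (hasFDerivAt_polarAngle h)

lemma fderiv_comp_polarAngle_apply {f : ℝ → ℝ} {p : ℝ × ℝ}
    (hf : DifferentiableAt ℝ f (polarAngle p)) (h : p.1 ≠ 0) (e : ℝ × ℝ) :
    fderiv ℝ (fun q => f (polarAngle q)) p e = deriv f (polarAngle p) * polarAngleGrad p e :=
  DFunLike.congr_fun (hf.hasDerivAt.hasFDerivAt_comp_polarAngle h).fderiv e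

lemma hasFDerivAt_polarAngleGrad_apply {p : ℝ × ℝ} (h : p.1 ≠ 0) (e : ℝ × ℝ) :
    HasFDerivAt (fun q => polarAngleGrad q e)
      ((p.1 ^ 2 + p.2 ^ 2)⁻¹ •
          (e.2 • ContinuousLinearMap.fst ℝ ℝ ℝ - e.1 • ContinuousLinearMap.snd ℝ ℝ ℝ)
        - (2 * polarAngleGrad p e / (p.1 ^ 2 + p.2 ^ 2)) •
          (p.1 • ContinuousLinearMap.fst ℝ ℝ ℝ + p.2 • ContinuousLinearMap.snd ℝ ℝ ℝ)) p := by
  have hr : p.1 ^ 2 + p.2 ^ 2 ≠ 0 := by positivity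
  have hnum : HasFDerivAt (fun q : ℝ × ℝ => q.1 * e.2 - q.2 * e.1)
      (e.2 • ContinuousLinearMap.fst ℝ ℝ ℝ - e.1 • ContinuousLinearMap.snd ℝ ℝ ℝ) p :=
    ((hasFDerivAt_fst.mul_const e.2).sub (hasFDerivAt_snd.mul_const e.1)).congr_fderiv
      (ContinuousLinearMap.ext fun _ => by simp)
  have hden : HasFDerivAt (fun q : ℝ × ℝ => (q.1 ^ 2 + q.2 ^ 2)⁻¹)
      (-((p.1 ^ 2 + p.2 ^ 2) ^ 2)⁻¹ • ((2 * p.1) • ContinuousLinearMap.fst ℝ ℝ ℝ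
        + (2 * p.2) • ContinuousLinearMap.snd ℝ ℝ ℝ)) p :=
    (hasDerivAt_inv hr).comp_hasFDerivAt p
      (((hasFDerivAt_fst.pow 2).add (hasFDerivAt_snd.pow 2)).congr_fderiv
        (ContinuousLinearMap.ext fun _ => by simp))
  simp only [polarAngleGrad_apply, div_eq_mul_inv]
  refine (hnum.mul hden).congr_fderiv <| ContinuousLinearMap.ext fun z => ?_
  simp only [add_apply, sub_apply, smul_apply, smul_eq_mul, ContinuousLinearMap.coe_fst',
    ContinuousLinearMap.coe_snd']
  field_simp
  ring

lemma divergence_polarAngleGrad_eq_zero {p : ℝ × ℝ} (h : p.1 ≠ 0) :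
    fderiv ℝ (fun q => polarAngleGrad q (1, 0)) p (1, 0)
      + fderiv ℝ (fun q => polarAngleGrad q (0, 1)) p (0, 1) = 0 := by
  rw [(hasFDerivAt_polarAngleGrad_apply h _).fderiv,
    (hasFDerivAt_polarAngleGrad_apply h _).fderiv]
  simp only [sub_apply, smul_apply, add_apply, smul_eq_mul, ContinuousLinearMap.coe_fst',
    ContinuousLinearMap.coe_snd', polarAngleGrad_apply]
  ring

lemma divergence_comp_polarAngle_mul_grad {g : ℝ → ℝ} {g' : ℝ} {p : ℝ × ℝ}
    (hg : HasDerivAt g g' (polarAngle p)) (h : p.1 ≠ 0) :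
    fderiv ℝ (fun q => g (polarAngle q) * polarAngleGrad q (1, 0)) p (1, 0)
      + fderiv ℝ (fun q => g (polarAngle q) * polarAngleGrad q (0, 1)) p (0, 1)
      = g' / (p.1 ^ 2 + p.2 ^ 2) := by
  have hgθ := (hg.hasFDerivAt_comp_polarAngle h).differentiableAt
  rw [fderiv_fun_mul hgθ (hasFDerivAt_polarAngleGrad_apply h _).differentiableAt,
    fderiv_fun_mul hgθ (hasFDerivAt_polarAngleGrad_apply h _).differentiableAt,
    (hg.hasFDerivAt_comp_polarAngle h).fderiv]
  have hr : p.1 ^ 2 + p.2 ^ 2 ≠ 0 := by positivity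
  have hdiv := divergence_polarAngleGrad_eq_zero h
  simp only [add_apply, smul_apply, smul_eq_mul, polarAngleGrad_apply p]
  field_simp
  linear_combination (p.1 ^ 2 + p.2 ^ 2) ^ 2 * g (polarAngle p) * hdiv

lemma one_add_sq_add_sq_mul_polarAngleGrad_eq (H K t : ℝ) (hK : K < 0) {p : ℝ × ℝ}
    (h₁ : p.1 ≠ 0) (h₂ : p.2 ≠ 0) :
    1 + (t * polarAngleGrad p (1, 0) / (1 / (√(-K) * p.2))
          + 2 * H * (1 / (√(-K) * p.2)) * p.2) ^ 2
        + (t * polarAngleGrad p (0, 1) / (1 / (√(-K) * p.2))) ^ 2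
      = 1 - 4 * H ^ 2 / K - 4 * H * sin (polarAngle p) ^ 2 * t
        - K * sin (polarAngle p) ^ 2 * t ^ 2 := by
  obtain ⟨S, hS, rfl⟩ : ∃ S : ℝ, 0 < S ∧ K = -S ^ 2 :=
    ⟨√(-K), sqrt_pos.2 (neg_pos.2 hK), by rw [sq_sqrt (neg_pos.2 hK).le, neg_neg]⟩
  rw [neg_neg, sqrt_sq hS.le, sin_polarAngle_sq h₁]
  simp only [polarAngleGrad_apply]
  field_simp
  ring

lemma minimal_surface_operator_eq_div (H K W W' v' v'' : ℝ) {a b : ℝ} (hK : K ≠ 0)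
    (ha : a ≠ 0) (hb : b ≠ 0) :
    2 * W * (v'' / (a ^ 2 + b ^ 2))
        - ((2 * H / (-K * b) + v' * polarAngleGrad (a, b) (1, 0))
              * (W' * polarAngleGrad (a, b) (1, 0))
          + v' * polarAngleGrad (a, b) (0, 1) * (W' * polarAngleGrad (a, b) (0, 1)))
      = (2 * W * K * v'' - W' * (2 * H + K * v')) / (K * (a ^ 2 + b ^ 2)) := by
  simp only [polarAngleGrad_apply]
  field_simp
  ring

/-- For a rotation-invariant graph `u(x,y) = v(arctan(y/x))` over the open first
quadrant, the minimal surface equation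
`2w(u_xx + u_yy) − ((2H/(−K·y) + u_x)w_x + u_y w_y) = 0`
in the model of `E(κ+4H², H)` (with `K := 4H² + κ < 0`, `λ = 1/(√(−K)·y)` and
`w = 1 + (u_x/λ + 2Hλy)² + (u_y/λ)²`) holds at `(x,y)` iff the ODE
`2·W(s)·K·v″(s) − W′(s)·(2H + K·v′(s)) = 0` holds at `s = arctan(y/x)`, where
`W(s) = 1 − 4H²/K − 4H·sin²(s)·v′(s) − K·sin²(s)·v′(s)²`. -/
theorem minimal_surface_equation_reduces_to_ODE
    (H κ : ℝ) (hK : 4 * H ^ 2 + κ < 0)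
    (v : ℝ → ℝ) (hv : ContDiffOn ℝ 2 v (Ioo 0 (π / 2)))
    (x y : ℝ) (hx : 0 < x) (hy : 0 < y) :
    let K : ℝ := 4 * H ^ 2 + κ
    let u : ℝ × ℝ → ℝ := fun p => v (Real.arctan (p.2 / p.1))
    let lam : ℝ × ℝ → ℝ := fun p => 1 / (Real.sqrt (-K) * p.2)
    let ux : ℝ × ℝ → ℝ := fun p => fderiv ℝ u p (1, 0)
    let uy : ℝ × ℝ → ℝ := fun p => fderiv ℝ u p (0, 1)
    let w : ℝ × ℝ → ℝ := fun p =>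
      1 + (ux p / lam p + 2 * H * lam p * p.2) ^ 2 + (uy p / lam p) ^ 2
    let uxx : ℝ := fderiv ℝ ux (x, y) (1, 0)
    let uyy : ℝ := fderiv ℝ uy (x, y) (0, 1)
    let wx : ℝ := fderiv ℝ w (x, y) (1, 0)
    let wy : ℝ := fderiv ℝ w (x, y) (0, 1)
    let s : ℝ := Real.arctan (y / x)
    let W : ℝ → ℝ := fun t =>
      1 - 4 * H ^ 2 / K - 4 * H * (Real.sin t) ^ 2 * deriv v t
        - K * (Real.sin t) ^ 2 * (deriv v t) ^ 2
    (2 * w (x, y) * (uxx + uyy)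
        - ((2 * H / (-K * y) + ux (x, y)) * wx + uy (x, y) * wy) = 0)
      ↔ 2 * W s * K * deriv (deriv v) s - deriv W s * (2 * H + K * deriv v s) = 0 := by
  intro K u lam ux uy w uxx uyy wx wy s W
  have hs : s ∈ Ioo 0 (π / 2) := polarAngle_mem_Ioo (p := (x, y)) hx hy
  have hv' : ∀ t ∈ Ioo 0 (π / 2), DifferentiableAt ℝ v t := fun t ht =>
    (hv.differentiableOn (by norm_num) t ht).differentiableAt (isOpen_Ioo.mem_nhds ht)
  have hv'' : DifferentiableAt ℝ (deriv v) s :=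
    ((hv.deriv_of_isOpen (m := 1) isOpen_Ioo (by norm_num)).differentiableOn one_ne_zero s
      hs).differentiableAt (isOpen_Ioo.mem_nhds hs)
  have hQ : ∀ᶠ q in 𝓝 (x, y), 0 < q.1 ∧ 0 < q.2 :=
    (continuousAt_const.eventually_lt continuousAt_fst hx).and
      (continuousAt_const.eventually_lt continuousAt_snd hy)
  have hu : ∀ q : ℝ × ℝ, 0 < q.1 → 0 < q.2 → ∀ e,
      fderiv ℝ u q e = deriv v (polarAngle q) * polarAngleGrad q e := fun q h₁ h₂ =>
    fderiv_comp_polarAngle_apply (hv' _ (polarAngle_mem_Ioo h₁ h₂)) h₁.ne'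
  have hux : ux =ᶠ[𝓝 (x, y)] fun q => deriv v (polarAngle q) * polarAngleGrad q (1, 0) :=
    hQ.mono fun q hq => hu q hq.1 hq.2 (1, 0)
  have huy : uy =ᶠ[𝓝 (x, y)] fun q => deriv v (polarAngle q) * polarAngleGrad q (0, 1) :=
    hQ.mono fun q hq => hu q hq.1 hq.2 (0, 1)
  have hΔu : uxx + uyy = deriv (deriv v) s / (x ^ 2 + y ^ 2) := by
    change fderiv ℝ ux (x, y) (1, 0) + fderiv ℝ uy (x, y) (0, 1) = _
    rw [hux.fderiv_eq, huy.fderiv_eq]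
    exact divergence_comp_polarAngle_mul_grad hv''.hasDerivAt hx.ne'
  have hw : w =ᶠ[𝓝 (x, y)] fun q => W (polarAngle q) := hQ.mono fun q hq => by
    simp only [w, lam, ux, uy, hu q hq.1 hq.2]
    exact one_add_sq_add_sq_mul_polarAngleGrad_eq H K _ hK hq.1.ne' hq.2.ne'
  have hW : DifferentiableAt ℝ W s := by fun_prop
  have hw' : ∀ e, fderiv ℝ w (x, y) e = deriv W s * polarAngleGrad (x, y) e := fun e => by
    rw [hw.fderiv_eq]
    exact fderiv_comp_polarAngle_apply (f := W) (p := (x, y)) hW hx.ne' e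
  simp only [wx, wy, ux, uy, hw.eq_of_nhds, hΔu, hu (x, y) hx hy, hw',
    show polarAngle (x, y) = s from rfl]
  rw [minimal_surface_operator_eq_div H K _ _ _ _ hK.ne hx.ne' hy.ne', div_eq_zero_iff,
    or_iff_left (mul_ne_zero hK.ne (by positivity))]
end

section
/- Let H, κ ∈ ℝ with K := 4H² + κ < 0. Define u₀ : [0, π/2) → ℝ by u₀(s) := (1/K)·(−2H·s + ∫₀ˢ √(4H²·cos²(t) − K)/cos(t) dt). Then u₀ is differentiable on (0, π/2), with u₀′(s) = (1/K)·(−2H + √(4H²·cos²(s) − K)/cos(s)), and for every s ∈ (0, π/2) the first-integral identity (2H + K·u₀′(s))² = −K·W(s) holds, where W(s) := 1 − 4H²/K − 4H·sin²(s)·u₀′(s) − K·sin²(s)·u₀′(s)²; moreover W(s) > 0 for all s ∈ (0, π/2). -/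
/-!
The derivative of `u₀` is the fundamental theorem of calculus. The first integral is then
algebra: for every slope `d`, writing `p := 2H + K d`,
`-K · W = 4H² cos² s - K + sin² s · p²`, so `(2H + K u₀')² = -K W` amounts to
`(cos s · p)² = 4H² cos² s - K`, which is the defining formula of `u₀'` squared.
The same expansion shows `-K · W > 0` whatever the slope, since `-K > 0`.
-/

open Real Set MeasureTheory intervalIntegral

theorem hasDerivAt_integral_of_continuousOn {f : ℝ → ℝ} {U : Set ℝ} (hU : IsOpen U)
    (hU' : U.OrdConnected) (hf : ContinuousOn f U) {a b : ℝ} (ha : a ∈ U) (hb : b ∈ U) :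
    HasDerivAt (fun u => ∫ t in a..u, f t) (f b) b :=
  integral_hasDerivAt_right ((hf.mono (hU'.uIcc_subset ha hb)).intervalIntegrable)
    (hf.stronglyMeasurableAtFilter hU b hb) (hf.continuousAt (hU.mem_nhds hb))

theorem hasDerivAt_integral_div_cos {g : ℝ → ℝ} (hg : Continuous g) {s : ℝ}
    (hs : s ∈ Ioo (-(π / 2)) (π / 2)) :
    HasDerivAt (fun u => ∫ t in (0 : ℝ)..u, g t / cos t) (g s / cos s) s := by
  have hcos : ContinuousOn (fun t => g t / cos t) (Ioo (-(π / 2)) (π / 2)) :=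
    hg.continuousOn.div continuous_cos.continuousOn fun t ht => (cos_pos_of_mem_Ioo ht).ne'
  exact hasDerivAt_integral_of_continuousOn isOpen_Ioo ordConnected_Ioo hcos
    ⟨by linarith [pi_pos], by linarith [pi_pos]⟩ hs

/-- The gradient quantity `w` of a rotation-invariant section with slope `d = u'(s)`. -/
noncomputable def scherkGradient (H K s d : ℝ) : ℝ :=
  1 - 4 * H ^ 2 / K - 4 * H * sin s ^ 2 * d - K * sin s ^ 2 * d ^ 2

theorem neg_mul_scherkGradient {K : ℝ} (hK : K ≠ 0) (H s d : ℝ) :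
    -K * scherkGradient H K s d = 4 * H ^ 2 * cos s ^ 2 - K + sin s ^ 2 * (2 * H + K * d) ^ 2 := by
  rw [scherkGradient, cos_sq']
  field_simp
  ring

theorem scherkGradient_pos {K : ℝ} (hK : K < 0) (H s d : ℝ) : 0 < scherkGradient H K s d := by
  have h : 0 < -K * scherkGradient H K s d := by
    rw [neg_mul_scherkGradient hK.ne]
    nlinarith [sq_nonneg (H * cos s), sq_nonneg (sin s * (2 * H + K * d))]
  exact pos_of_mul_pos_right h (neg_nonneg.mpr hK.le)

theorem sq_eq_neg_mul_scherkGradient {K : ℝ} (hK : K ≠ 0) {H s d : ℝ}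
    (hd : (cos s * (2 * H + K * d)) ^ 2 = 4 * H ^ 2 * cos s ^ 2 - K) :
    (2 * H + K * d) ^ 2 = -K * scherkGradient H K s d := by
  rw [neg_mul_scherkGradient hK, sin_sq]
  linear_combination hd

/-- The Scherk-type profile
`u₀(s) = (1/K)·(−2H·s + ∫₀ˢ √(4H²·cos²(t) − K)/cos(t) dt)` (with `K := 4H² + κ < 0`)
is differentiable on `(0, π/2)` with the stated derivative, satisfies the
first-integral identity `(2H + K·u₀′)² = −K·W` where
`W(s) = 1 − 4H²/K − 4H·sin²(s)·u₀′(s) − K·sin²(s)·u₀′(s)²`, and `W > 0`. -/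
theorem scherk_profile_first_integral
    (H κ : ℝ) (hK : 4 * H ^ 2 + κ < 0) :
    let K : ℝ := 4 * H ^ 2 + κ
    let u₀ : ℝ → ℝ := fun s => (1 / K) *
      (-2 * H * s + ∫ t in (0:ℝ)..s, Real.sqrt (4 * H ^ 2 * (Real.cos t) ^ 2 - K) / Real.cos t)
    let W : ℝ → ℝ := fun s =>
      1 - 4 * H ^ 2 / K - 4 * H * (Real.sin s) ^ 2 * deriv u₀ s
        - K * (Real.sin s) ^ 2 * (deriv u₀ s) ^ 2
    ∀ s ∈ Ioo 0 (π / 2),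
      HasDerivAt u₀ ((1 / K) *
        (-2 * H + Real.sqrt (4 * H ^ 2 * (Real.cos s) ^ 2 - K) / Real.cos s)) s
      ∧ (2 * H + K * deriv u₀ s) ^ 2 = -K * W s
      ∧ 0 < W s := by
  intro K u₀ W s hs
  have hK0 : K < 0 := hK
  have hs' : s ∈ Ioo (-(π / 2)) (π / 2) := ⟨by linarith [hs.1, pi_pos], hs.2⟩
  have hcos : cos s ≠ 0 := (cos_pos_of_mem_Ioo hs').ne'
  set q := √(4 * H ^ 2 * cos s ^ 2 - K)
  have hu₀ : HasDerivAt u₀ ((1 / K) * (-2 * H + q / cos s)) s := by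
    have hlin : HasDerivAt (fun u : ℝ => -2 * H * u) (-2 * H) s := by
      simpa using (hasDerivAt_id s).const_mul (-2 * H)
    exact (hlin.add (hasDerivAt_integral_div_cos (by fun_prop) hs')).const_mul (1 / K)
  have hslope : cos s * (2 * H + K * deriv u₀ s) = q := by
    rw [hu₀.deriv]
    field_simp [hK0.ne]
    ring
  have hq : q ^ 2 = 4 * H ^ 2 * cos s ^ 2 - K := sq_sqrt (by nlinarith [sq_nonneg (H * cos s)])
  exact ⟨hu₀, sq_eq_neg_mul_scherkGradient hK0.ne (hslope ▸ hq), scherkGradient_pos hK0 H s _⟩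
end

section
/- Let H, κ ∈ ℝ with K := 4H² + κ < 0. Define u₀ : [0, π/2) → ℝ by u₀(s) := (1/K)·(−2H·s + ∫₀ˢ √(4H²·cos²(t) − K)/cos(t) dt), and W(s) := 1 − 4H²/K − 4H·sin²(s)·u₀′(s) − K·sin²(s)·u₀′(s)². Then u₀ is twice differentiable on (0, π/2), W is differentiable on (0, π/2), and 2·W(s)·K·u₀″(s) − W′(s)·(2H + K·u₀′(s)) = 0 for all s ∈ (0, π/2). -/
open Real Set MeasureTheory intervalIntegral

/-!
With `a(s) := √(4H²cos²s − K)`, the fundamental theorem of calculus gives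
`K u₀′ + 2H = a / cos`, and since `a² = 4H²cos² − K` this turns into the quadratic relation
`K u₀′² + 4H u₀′ = −1/cos²`. Hence the gradient quantity collapses to `W = 1/cos² − 4H²/K`,
with `W′ = 2 sin/cos³`, while `u₀″ = −sin/(cos² a)`; substituting, the ODE reduces to
`a² = 4H²cos² − K` once more.
-/

noncomputable section

namespace Scherk

variable (H K : ℝ)

def integrand (t : ℝ) : ℝ := √(4 * H ^ 2 * cos t ^ 2 - K) / cos t

def profile (s : ℝ) : ℝ := (1 / K) * (-2 * H * s + ∫ t in (0 : ℝ)..s, integrand H K t)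

def slope (s : ℝ) : ℝ := (integrand H K s - 2 * H) / K

def gradientQuantity (s : ℝ) : ℝ :=
  1 - 4 * H ^ 2 / K - 4 * H * sin s ^ 2 * deriv (profile H K) s
    - K * sin s ^ 2 * deriv (profile H K) s ^ 2

variable {H K}

lemma radicand_pos (hK : K < 0) (t : ℝ) : 0 < 4 * H ^ 2 * cos t ^ 2 - K := by
  nlinarith [sq_nonneg (H * cos t)]

lemma continuousOn_integrand : ContinuousOn (integrand H K) (Ioo (-(π / 2)) (π / 2)) :=
  fun _ ht => ((by fun_prop : Continuous fun t => √(4 * H ^ 2 * cos t ^ 2 - K)).continuousAt.div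
    continuous_cos.continuousAt (cos_pos_of_mem_Ioo ht).ne').continuousWithinAt

lemma hasDerivAt_profile {s : ℝ} (hs : s ∈ Ioo (-(π / 2)) (π / 2)) :
    HasDerivAt (profile H K) (slope H K s) s := by
  have hcont := continuousOn_integrand (H := H) (K := K)
  have hsub : uIcc 0 s ⊆ Ioo (-(π / 2)) (π / 2) :=
    ordConnected_Ioo.uIcc_subset ⟨by linarith [pi_pos], by linarith [pi_pos]⟩ hs
  have hFTC : HasDerivAt (fun x => ∫ t in (0 : ℝ)..x, integrand H K t) (integrand H K s) s :=
    integral_hasDerivAt_right (hcont.mono hsub).intervalIntegrable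
      (hcont.stronglyMeasurableAtFilter isOpen_Ioo s hs)
      (hcont.continuousAt (isOpen_Ioo.mem_nhds hs))
  refine ((((hasDerivAt_id' s).const_mul (-2 * H)).add hFTC).const_mul (1 / K)).congr_deriv ?_
  simp only [slope]
  ring

lemma eqOn_deriv_profile : EqOn (deriv (profile H K)) (slope H K) (Ioo (-(π / 2)) (π / 2)) :=
  fun _ hs => (hasDerivAt_profile hs).deriv

lemma hasDerivAt_slope (hK : K < 0) {s : ℝ} (hc : cos s ≠ 0) :
    HasDerivAt (slope H K) (-sin s / (cos s ^ 2 * √(4 * H ^ 2 * cos s ^ 2 - K))) s := by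
  have hR := radicand_pos (H := H) hK s
  have hsqrt := ((((hasDerivAt_cos s).pow 2).const_mul (4 * H ^ 2)).sub_const K).sqrt hR.ne'
  refine (((hsqrt.div (hasDerivAt_cos s) hc).sub_const (2 * H)).div_const K).congr_deriv ?_
  have ha : √(4 * H ^ 2 * cos s ^ 2 - K) ≠ 0 := (sqrt_pos.mpr hR).ne'
  have ha2 := sq_sqrt hR.le
  simp only [Pi.pow_apply, Nat.cast_ofNat, Nat.add_one_sub_one, pow_one]
  generalize √(4 * H ^ 2 * cos s ^ 2 - K) = a at ha ha2 ⊢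
  field_simp [hK.ne]
  linear_combination sin s * ha2

lemma mul_slope_add (hK : K ≠ 0) (s : ℝ) :
    K * slope H K s + 2 * H = √(4 * H ^ 2 * cos s ^ 2 - K) / cos s := by
  simp only [slope, integrand]
  field_simp
  ring

lemma slope_quadratic (hK : K < 0) {s : ℝ} (hc : cos s ≠ 0) :
    K * slope H K s ^ 2 + 4 * H * slope H K s = -1 / cos s ^ 2 := by
  have hlin := mul_slope_add (H := H) hK.ne s
  have ha2 := sq_sqrt (radicand_pos (H := H) hK s).le
  generalize slope H K s = p at hlin
  generalize √(4 * H ^ 2 * cos s ^ 2 - K) = a at hlin ha2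
  rw [eq_div_iff hc] at hlin
  rw [eq_div_iff (pow_ne_zero 2 hc)]
  apply mul_left_cancel₀ hK.ne
  linear_combination ((K * p + 2 * H) * cos s + a) * hlin + ha2

lemma hasDerivAt_deriv_profile (hK : K < 0) {s : ℝ} (hs : s ∈ Ioo (-(π / 2)) (π / 2)) :
    HasDerivAt (deriv (profile H K)) (-sin s / (cos s ^ 2 * √(4 * H ^ 2 * cos s ^ 2 - K))) s :=
  (hasDerivAt_slope hK (cos_pos_of_mem_Ioo hs).ne').congr_of_eventuallyEq
    (eqOn_deriv_profile.eventuallyEq_of_mem (isOpen_Ioo.mem_nhds hs))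

lemma eqOn_gradientQuantity (hK : K < 0) :
    EqOn (gradientQuantity H K) (fun x => (cos x ^ 2)⁻¹ - 4 * H ^ 2 / K)
      (Ioo (-(π / 2)) (π / 2)) := by
  intro s hs
  have hc := (cos_pos_of_mem_Ioo hs).ne'
  have hq := slope_quadratic (H := H) hK hc
  simp only [gradientQuantity, eqOn_deriv_profile hs]
  field_simp
  field_simp at hq
  linear_combination (-sin s ^ 2) * hq + sin_sq_add_cos_sq s

lemma hasDerivAt_gradientQuantity (hK : K < 0) {s : ℝ} (hs : s ∈ Ioo (-(π / 2)) (π / 2)) :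
    HasDerivAt (gradientQuantity H K) (2 * sin s / cos s ^ 3) s := by
  have hc := (cos_pos_of_mem_Ioo hs).ne'
  refine ((((hasDerivAt_cos s).pow 2).inv (pow_ne_zero 2 hc)).sub_const (4 * H ^ 2 / K)
    |>.congr_of_eventuallyEq ((eqOn_gradientQuantity hK).eventuallyEq_of_mem
      (isOpen_Ioo.mem_nhds hs))).congr_deriv ?_
  simp only [Pi.pow_apply]
  field_simp
  ring

lemma ode_residual_eq_zero (hK : K < 0) {s : ℝ} (hc : cos s ≠ 0) :
    2 * ((cos s ^ 2)⁻¹ - 4 * H ^ 2 / K) * K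
        * (-sin s / (cos s ^ 2 * √(4 * H ^ 2 * cos s ^ 2 - K)))
      - 2 * sin s / cos s ^ 3 * (2 * H + K * slope H K s) = 0 := by
  have hR := radicand_pos (H := H) hK s
  rw [add_comm, mul_slope_add hK.ne]
  have ha : √(4 * H ^ 2 * cos s ^ 2 - K) ≠ 0 := (sqrt_pos.mpr hR).ne'
  have ha2 := sq_sqrt hR.le
  generalize √(4 * H ^ 2 * cos s ^ 2 - K) = a at ha ha2 ⊢
  field_simp [hK.ne]
  linear_combination -2 * sin s * ha2

end Scherk

end

/-- The Scherk-type profile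
`u₀(s) = (1/K)·(−2H·s + ∫₀ˢ √(4H²·cos²(t) − K)/cos(t) dt)` (with `K := 4H² + κ < 0`)
is twice differentiable on `(0, π/2)`, the gradient quantity
`W(s) = 1 − 4H²/K − 4H·sin²(s)·u₀′(s) − K·sin²(s)·u₀′(s)²` is differentiable there,
and `u₀` solves the reduced minimal surface ODE
`2·W·K·u₀″ − W′·(2H + K·u₀′) = 0` on `(0, π/2)`. -/
theorem scherk_profile_solves_ODE
    (H κ : ℝ) (hK : 4 * H ^ 2 + κ < 0) :
    let K : ℝ := 4 * H ^ 2 + κ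
    let u₀ : ℝ → ℝ := fun s => (1 / K) *
      (-2 * H * s + ∫ t in (0:ℝ)..s, Real.sqrt (4 * H ^ 2 * (Real.cos t) ^ 2 - K) / Real.cos t)
    let W : ℝ → ℝ := fun s =>
      1 - 4 * H ^ 2 / K - 4 * H * (Real.sin s) ^ 2 * deriv u₀ s
        - K * (Real.sin s) ^ 2 * (deriv u₀ s) ^ 2
    DifferentiableOn ℝ u₀ (Ioo 0 (π / 2)) ∧
    DifferentiableOn ℝ (deriv u₀) (Ioo 0 (π / 2)) ∧
    DifferentiableOn ℝ W (Ioo 0 (π / 2)) ∧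
    ∀ s ∈ Ioo 0 (π / 2),
      2 * W s * K * deriv (deriv u₀) s - deriv W s * (2 * H + K * deriv u₀ s) = 0 := by
  intro K u₀ W
  rw [show W = Scherk.gradientQuantity H K from rfl, show u₀ = Scherk.profile H K from rfl]
  have hK' : K < 0 := hK
  have hI : Ioo 0 (π / 2) ⊆ Ioo (-(π / 2)) (π / 2) := Ioo_subset_Ioo_left (by linarith [pi_pos])
  have hu' s (hs : s ∈ Ioo 0 (π / 2)) := Scherk.hasDerivAt_profile (H := H) (K := K) (hI hs)
  have hu'' s (hs : s ∈ Ioo 0 (π / 2)) := Scherk.hasDerivAt_deriv_profile (H := H) hK' (hI hs)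
  have hW' s (hs : s ∈ Ioo 0 (π / 2)) := Scherk.hasDerivAt_gradientQuantity (H := H) hK' (hI hs)
  refine ⟨fun s hs => (hu' s hs).differentiableAt.differentiableWithinAt,
    fun s hs => (hu'' s hs).differentiableAt.differentiableWithinAt,
    fun s hs => (hW' s hs).differentiableAt.differentiableWithinAt, fun s hs => ?_⟩
  rw [(hu'' s hs).deriv, (hW' s hs).deriv, Scherk.eqOn_gradientQuantity hK' (hI hs),
    Scherk.eqOn_deriv_profile (hI hs)]
  exact Scherk.ode_residual_eq_zero hK' (cos_pos_of_mem_Ioo (hI hs)).ne'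
end
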